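/- Let N, n, j, m be positive integers, R a nonempty finite type with cardinality r = |R|, H : R → ZMod N a function, P : Fin n → Fin j a surjection, M : Matrix (Fin j) (Fin m) (ZMod N) a matrix, and e : ZMod N → ℂ the standard additive character e(a) = exp(2πi·a.val/N). For s : Fin m → ZMod N, let φ_s : (Fin n → R) → ℂ be the tensor-product phase state φ_s(x) = r^{-n/2} · e(∑_{i : Fin n} H(x i) * (∑_{t : Fin m} M (P i) t * s t)). For x : Fin n → R define ρ(x) : Fin j → ZMod N by ρ(x)(k) = ∑_{i : P i = k} H(x i). Then the averaged density matrix (1/N^m) · ∑_{s : Fin m → ZMod N} φ_s · (φ_s)† equals the matrix whose (x, x') entry is r^{-n} if Mᵀ.mulVec (ρ(x)) = Mᵀ.mulVec (ρ(x')) in (ZMod N)^m, and 0 otherwise. -/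

import Mathlib

open Complex

/-- The standard additive character of `ZMod N`: `e(a) = exp(2πi·a.val/N)`. -/
noncomputable def stdChar (N : ℕ) (a : ZMod N) : ℂ :=
  Complex.exp (2 * Real.pi * Complex.I * (a.val : ℂ) / (N : ℂ))

lemma stdChar_eq_std (N : ℕ) [NeZero N] (a : ZMod N) :
    stdChar N a = ZMod.stdAddChar a := by
  have h := ZMod.stdAddChar_coe (N := N) (a.val : ℤ)
  rw [show (((a.val : ℤ) : ZMod N)) = a by simp [ZMod.natCast_val]] at h
  rw [stdChar, h]; push_cast; ring_nf

lemma conj_std (N : ℕ) [NeZero N] (a : ZMod N) :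
    (starRingEnd ℂ) (ZMod.stdAddChar a) = ZMod.stdAddChar (-a) := by
  rw [ZMod.stdAddChar_apply, ZMod.stdAddChar_apply, AddChar.map_neg_eq_inv,
    ← Circle.coe_inv_eq_conj]

lemma addChar_map_sum {A M : Type*} [AddCommMonoid A] [CommMonoid M]
    (ψ : AddChar A M) {ι : Type*} (s : Finset ι) (f : ι → A) :
    ψ (∑ i ∈ s, f i) = ∏ i ∈ s, ψ (f i) := by
  classical
  induction s using Finset.induction_on with
  | empty => simp [AddChar.map_zero_eq_one]
  | @insert a s h ih =>
    rw [Finset.sum_insert h, Finset.prod_insert h, AddChar.map_add_eq_mul, ih]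

lemma char_vec_sum (N m : ℕ) [NeZero N] (v : Fin m → ZMod N) :
    ∑ s : Fin m → ZMod N, ZMod.stdAddChar (∑ t, v t * s t) =
      if v = 0 then ((N : ℂ) ^ m) else 0 := by
  have h1 (t : ZMod N) : ∑ c : ZMod N, ZMod.stdAddChar (t * c) =
      if t = 0 then (N : ℂ) else 0 := by
    split_ifs with h
    · simp [h, ZMod.card]
    · have := AddChar.sum_eq_zero_of_ne_one
        (ZMod.isPrimitive_stdAddChar N h)
      simpa [AddChar.mulShift_apply] using this
  calc ∑ s : Fin m → ZMod N, ZMod.stdAddChar (∑ t, v t * s t)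
      = ∑ s : Fin m → ZMod N, ∏ t, ZMod.stdAddChar (v t * s t) := by
        simp [addChar_map_sum]
    _ = ∏ t : Fin m, ∑ c : ZMod N, ZMod.stdAddChar (v t * c) := by
        rw [Finset.prod_univ_sum, Fintype.piFinset_univ]
    _ = if v = 0 then ((N : ℂ) ^ m) else 0 := by
        simp only [h1]
        split_ifs with h
        · simp [h, Finset.card_univ]
        · obtain ⟨t, ht⟩ := Function.ne_iff.mp h
          simp only [Pi.zero_apply] at ht
          exact Finset.prod_eq_zero (Finset.mem_univ t) (by simp [ht])

theorem averaged_phase_state_density_b1 (N n j m : ℕ)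
    (hN : 0 < N) [NeZero N] (hn : 0 < n) (hj : 0 < j) (hm : 0 < m)
    (R : Type) [Fintype R] [Nonempty R] (H : R → ZMod N)
    (P : Fin n → Fin j) (hP : Function.Surjective P)
    (M : Matrix (Fin j) (Fin m) (ZMod N))
    (φ : (Fin m → ZMod N) → (Fin n → R) → ℂ)
    (hφ : ∀ s x, φ s x =
      ((Real.sqrt ((Fintype.card R : ℝ) ^ n))⁻¹ : ℂ) *
        stdChar N (∑ i, H (x i) * (∑ t, M (P i) t * s t)))
    (ρ : (Fin n → R) → Fin j → ZMod N)
    (hρ : ∀ x k, ρ x k = ∑ i ∈ Finset.univ.filter (fun i => P i = k), H (x i)) :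
    ((1 / (N : ℂ) ^ m) •
        ∑ s : Fin m → ZMod N,
          Matrix.of fun x x' : Fin n → R => φ s x * (starRingEnd ℂ) (φ s x')) =
      Matrix.of fun x x' : Fin n → R =>
        if M.transpose.mulVec (ρ x) = M.transpose.mulVec (ρ x')
          then ((Fintype.card R : ℂ) ^ n)⁻¹ else 0 := by
  have key : ∀ (x : Fin n → R) (s : Fin m → ZMod N),
      ∑ i, H (x i) * (∑ t, M (P i) t * s t) =
        ∑ t, (M.transpose.mulVec (ρ x)) t * s t := by
    intro x s
    have hcol : ∀ t, (M.transpose.mulVec (ρ x)) t = ∑ i, H (x i) * M (P i) t := by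
      intro t
      rw [Matrix.mulVec, dotProduct]
      calc ∑ k, M.transpose t k * ρ x k
          = ∑ k, ∑ i ∈ Finset.univ.filter (fun i => P i = k),
              H (x i) * M (P i) t := by
            refine Finset.sum_congr rfl fun k _ => ?_
            rw [hρ, Matrix.transpose_apply, Finset.mul_sum]
            refine Finset.sum_congr rfl fun i hi => ?_
            rw [(Finset.mem_filter.mp hi).2]; ring
        _ = ∑ i, H (x i) * M (P i) t := Finset.sum_fiberwise _ _ _
    simp only [hcol, Finset.sum_mul, Finset.mul_sum]
    rw [Finset.sum_comm]
    apply Finset.sum_congr rfl; intros; apply Finset.sum_congr rfl; intros; ring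
  ext x x'
  simp only [Matrix.smul_apply, Matrix.sum_apply, Matrix.of_apply, smul_eq_mul]
  have hc : (((Real.sqrt ((Fintype.card R : ℝ) ^ n) : ℂ))⁻¹) *
      (starRingEnd ℂ) (((Real.sqrt ((Fintype.card R : ℝ) ^ n) : ℂ))⁻¹) =
      ((Fintype.card R : ℂ) ^ n)⁻¹ := by
    rw [map_inv₀, Complex.conj_ofReal, ← mul_inv, ← Complex.ofReal_mul,
      Real.mul_self_sqrt (by positivity)]
    push_cast; ring
  have hsum : ∀ s : Fin m → ZMod N, φ s x * (starRingEnd ℂ) (φ s x') =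
      ((Fintype.card R : ℂ) ^ n)⁻¹ *
        ZMod.stdAddChar (∑ t, (M.transpose.mulVec (ρ x) t -
          M.transpose.mulVec (ρ x') t) * s t) := by
    intro s
    rw [hφ, hφ, stdChar_eq_std, stdChar_eq_std, map_mul, conj_std, key, key]
    rw [show (∑ t, (M.transpose.mulVec (ρ x) t - M.transpose.mulVec (ρ x') t) * s t)
        = (∑ t, M.transpose.mulVec (ρ x) t * s t) +
          -(∑ t, M.transpose.mulVec (ρ x') t * s t) by
      rw [← Finset.sum_neg_distrib, ← Finset.sum_add_distrib]
      apply Finset.sum_congr rfl; intros; ring]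
    rw [AddChar.map_add_eq_mul, ← hc]
    ring
  simp only [hsum, ← Finset.mul_sum]
  rw [char_vec_sum]
  have hv : ((fun t => M.transpose.mulVec (ρ x) t - M.transpose.mulVec (ρ x') t) = 0) ↔
      M.transpose.mulVec (ρ x) = M.transpose.mulVec (ρ x') := by
    rw [funext_iff, funext_iff]
    simp [sub_eq_zero]
  simp only [hv]
  split_ifs with h
  · have hNm : ((N : ℂ) ^ m) ≠ 0 := by
      exact pow_ne_zero _ (Nat.cast_ne_zero.mpr (NeZero.ne N))
    field_simp
  · ring
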